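/- With G, G^{inv}, \curvearrowleft as above and the conjugation action h \curvearrowright g := h \centerdot g \centerdot h^{-1} of G^{inv} on G, the compatibility identity (h \curvearrowright g') \times g = (h \curvearrowleft g) \curvearrowright (g' \times g) holds for all h \in G^{inv} and g, g' \in G. -/

import Mathlib

/-- Transport along an equality of indices. -/
def castP {P : ℕ → Type} {a b : ℕ} (h : a = b) (p : P a) : P b := h ▸ p

/-- The data of a total operadic composition on the collection `P`:
`γ(p; q₁,…,q_k) ∈ P(n₁+⋯+n_k)` for `p ∈ P(k)`, `qᵢ ∈ P(nᵢ)`. -/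
abbrev OpGamma (P : ℕ → Type) :=
  ∀ {k : ℕ} (ns : Fin k → ℕ), P k → (∀ i, P (ns i)) → P (∑ i, ns i)

/-- The canonical order-preserving identification `(i, j) ↦ n₁ + ⋯ + n_{i-1} + j` of
`Σ i, Fin (ns i)` with `Fin (∑ i, ns i)`. -/
def finSigmaMk {k : ℕ} (ns : Fin k → ℕ) (i : Fin k) (j : Fin (ns i)) : Fin (∑ l, ns l) :=
  ⟨(∑ l ∈ Finset.univ.filter (fun l => l < i), ns l) + j.1, by
    have h1 := Finset.sum_filter_add_sum_filter_not (Finset.univ : Finset (Fin k))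
      (fun l => l < i) ns
    have h2 : ns i ≤ ∑ l ∈ Finset.univ.filter (fun l => ¬ l < i), ns l :=
      Finset.single_le_sum (f := ns) (fun _ _ => Nat.zero_le _) (by simp)
    have h3 := j.2
    omega⟩

/-- The pair `(a, b)` as a function on `Fin 2`. -/
def pairFun (a b : ℕ) : Fin 2 → ℕ := fun i => if i.1 = 0 then a else b

/-- A pair of operators as inputs for an arity-2 operator. -/
def pairP {P : ℕ → Type} {a b : ℕ} (p : P a) (q : P b) : ∀ i : Fin 2, P (pairFun a b i) :=
  fun i =>
    if h : i.1 = 0 then castP (by simp [pairFun, h]) p else castP (by simp [pairFun, h]) q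

/-- `(P, γ, id, m)` is an operad with multiplication: `γ` is associative, unital,
multilinear, `P(1) = ℂ·id`, and the distinguished arity-2 element `m` satisfies
`m ∘₁ m = m ∘₂ m`. -/
structure IsOperadMul {P : ℕ → Type} [∀ n, AddCommGroup (P n)] [∀ n, Module ℂ (P n)]
    (gamma : OpGamma P) (idP : P 1) (m : P 2) : Prop where
  assoc : ∀ {k : ℕ} (ns : Fin k → ℕ) (p : P k) (qs : ∀ i, P (ns i))
      (ms : Fin (∑ i, ns i) → ℕ) (rs : ∀ l, P (ms l)),
      HEq (gamma ms (gamma ns p qs) rs)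
        (gamma (fun i => ∑ j : Fin (ns i), ms (finSigmaMk ns i j)) p
          (fun i => gamma (fun j => ms (finSigmaMk ns i j)) (qs i)
            (fun j => rs (finSigmaMk ns i j))))
  unit_left : ∀ (n : ℕ) (q : P n), HEq (gamma (fun _ : Fin 1 => n) idP (fun _ => q)) q
  unit_right : ∀ (k : ℕ) (p : P k), HEq (gamma (fun _ : Fin k => 1) p (fun _ => idP)) p
  add_left : ∀ {k : ℕ} (ns : Fin k → ℕ) (p p' : P k) (qs : ∀ i, P (ns i)),
      gamma ns (p + p') qs = gamma ns p qs + gamma ns p' qs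
  smul_left : ∀ {k : ℕ} (ns : Fin k → ℕ) (c : ℂ) (p : P k) (qs : ∀ i, P (ns i)),
      gamma ns (c • p) qs = c • gamma ns p qs
  add_right : ∀ {k : ℕ} (ns : Fin k → ℕ) (p : P k) (qs : ∀ i, P (ns i)) (i : Fin k)
      (q q' : P (ns i)),
      gamma ns p (Function.update qs i (q + q')) =
        gamma ns p (Function.update qs i q) + gamma ns p (Function.update qs i q')
  smul_right : ∀ {k : ℕ} (ns : Fin k → ℕ) (p : P k) (qs : ∀ i, P (ns i)) (i : Fin k)
      (c : ℂ) (q : P (ns i)),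
      gamma ns p (Function.update qs i (c • q)) = c • gamma ns p (Function.update qs i q)
  one_dim : ∀ p : P 1, ∃ c : ℂ, p = c • idP
  mul_op : HEq (gamma (pairFun 2 1) m (pairP m idP)) (gamma (pairFun 1 2) m (pairP idP m))

/-- Series of operators, `ℂ[[𝒫]] = ∏ₙ P(n)` (only components `n ≥ 1` are relevant). -/
abbrev Ser (P : ℕ → Type) := ∀ n, P n

/-- The substitution product `(x × y)_N = ∑_{k, n₁+⋯+n_k = N} γ(x_k; y_{n₁},…,y_{n_k})`,
i.e. the sum over all compositions of `N`.  For `h ∈ G^{inv} = 1 + ℂ[[𝒫]]` and `g ∈ G`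
this is also the right action `h ↶ g := h × g` (the constant term passing through). -/
def timesS {P : ℕ → Type} [∀ n, AddCommGroup (P n)] (gamma : OpGamma P)
    (x y : Ser P) : Ser P := fun N =>
  if hN : N = 0 then 0 else
    ∑ c : Composition N,
      castP c.sum_blocksFun
        (gamma c.blocksFun (x c.length) (fun i => y (c.blocksFun i)))

/-- The concatenation product of (tails of) series induced by the multiplication `m`:
`(x ∙ y)_N = ∑_{k+q=N, k,q ≥ 1} γ(m; x_k, y_q)`. -/
def cdotSS {P : ℕ → Type} [∀ n, AddCommGroup (P n)] (gamma : OpGamma P) (m : P 2)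
    (x y : Ser P) : Ser P := fun N =>
  ∑ k ∈ (Finset.Ioo 0 N).attach,
    castP (show ∑ i, pairFun k.1 (N - k.1) i = N by
        have h := Finset.mem_Ioo.mp k.2
        simp only [pairFun, Fin.sum_univ_two, Fin.val_zero, Fin.val_one]
        simp only [if_true, if_neg one_ne_zero, reduceIte]
        omega)
      (gamma (pairFun k.1 (N - k.1)) m (pairP (x k.1) (y (N - k.1))))

/-- The product of the group `G^{inv}` of series with constant term `1`, on tails:
`(1+x)(1+y) = 1 + (x + y + x∙y)`. -/
def gmul {P : ℕ → Type} [∀ n, AddCommGroup (P n)] (gamma : OpGamma P) (m : P 2)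
    (x y : Ser P) : Ser P :=
  x + y + cdotSS gamma m x y

/-- The operad identity `I` viewed as a series. -/
def Iser {P : ℕ → Type} [∀ n, AddCommGroup (P n)] (idP : P 1) : Ser P := fun n =>
  if h : n = 1 then castP h.symm idP else 0

/-- Conjugation `h ↷ g = h ∙ g ∙ h⁻¹` on tails: given `h = 1 + x` with inverse `1 + y`,
`(1+x) ∙ g ∙ (1+y) = g + x∙g + g∙y + x∙g∙y`. -/
def conjS {P : ℕ → Type} [∀ n, AddCommGroup (P n)] (gamma : OpGamma P) (m : P 2)
    (x g y : Ser P) : Ser P :=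
  g + cdotSS gamma m x g + cdotSS gamma m g y + cdotSS gamma m (cdotSS gamma m x g) y

/-- Left translation `λ(h) = I ∙ h` of `G^{inv}` into `G`, on tails. -/
def lamS {P : ℕ → Type} [∀ n, AddCommGroup (P n)] (gamma : OpGamma P) (idP : P 1)
    (m : P 2) (x : Ser P) : Ser P :=
  Iser idP + cdotSS gamma m (Iser idP) x

/-- Right translation `ρ(h) = h ∙ I` of `G^{inv}` into `G`, on tails. -/
def rhoS {P : ℕ → Type} [∀ n, AddCommGroup (P n)] (gamma : OpGamma P) (idP : P 1)
    (m : P 2) (x : Ser P) : Ser P :=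
  Iser idP + cdotSS gamma m x (Iser idP)

section Aux

variable {P : ℕ → Type}

theorem castP_heq {a b : ℕ} (h : a = b) (p : P a) : HEq (castP (P := P) h p) p := by
  subst h; rfl

theorem castP_rfl {a : ℕ} (h : a = a) (p : P a) : castP (P := P) h p = p :=
  eq_of_heq (castP_heq h p)

theorem castP_eq_castP {a b N : ℕ} (h : a = N) (h' : b = N) {p : P a} {q : P b}
    (hpq : HEq p q) : castP (P := P) h p = castP (P := P) h' q := by
  subst h; subst h'; exact congrArg _ (eq_of_heq hpq)

variable [∀ n, AddCommGroup (P n)]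

theorem castP_add {a b : ℕ} (h : a = b) (p q : P a) :
    castP (P := P) h (p + q) = castP h p + castP h q := by subst h; rfl

theorem castP_sum {a b : ℕ} (h : a = b) {ι : Type*} (s : Finset ι) (f : ι → P a) :
    castP (P := P) h (∑ i ∈ s, f i) = ∑ i ∈ s, castP h (f i) := by subst h; rfl

theorem gamma_congr (gamma : OpGamma P) {k k' : ℕ} (hk : k = k')
    {ns : Fin k → ℕ} {ns' : Fin k' → ℕ} (hns : ∀ i : Fin k', ns (Fin.cast hk.symm i) = ns' i)
    {p : P k} {p' : P k'} (hp : HEq p p')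
    {qs : ∀ i, P (ns i)} {qs' : ∀ i, P (ns' i)}
    (hqs : ∀ i : Fin k', HEq (qs (Fin.cast hk.symm i)) (qs' i)) :
    HEq (gamma ns p qs) (gamma ns' p' qs') := by
  subst hk
  have hns' : ns = ns' := funext fun i => hns i
  subst hns'
  obtain rfl : p = p' := eq_of_heq hp
  obtain rfl : qs = qs' := funext fun i => eq_of_heq (hqs i)
  rfl

end Aux

section Alg

variable {P : ℕ → Type} [∀ n, AddCommGroup (P n)] [∀ n, Module ℂ (P n)]
  {gamma : OpGamma P} {idP : P 1} {m : P 2}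

/-- `gamma` as an additive monoid hom in the left slot. -/
def gammaHomL (H : IsOperadMul gamma idP m) {k : ℕ} (ns : Fin k → ℕ)
    (qs : ∀ i, P (ns i)) : P k →+ P (∑ i, ns i) :=
  AddMonoidHom.mk' (fun p => gamma ns p qs) (fun p p' => H.add_left ns p p' qs)

theorem gamma_sum_left (H : IsOperadMul gamma idP m) {k : ℕ} (ns : Fin k → ℕ)
    {ι : Type*} (s : Finset ι) (f : ι → P k) (qs : ∀ i, P (ns i)) :
    gamma ns (∑ t ∈ s, f t) qs = ∑ t ∈ s, gamma ns (f t) qs :=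
  map_sum (gammaHomL H ns qs) f s

end Alg
section Pair

variable {P : ℕ → Type} [∀ n, AddCommGroup (P n)] [∀ n, Module ℂ (P n)]
  {gamma : OpGamma P} {idP : P 1} {m : P 2} {a b : ℕ}

theorem update_pairP_zero (p p' : P a) (q : P b) :
    Function.update (pairP p q) 0 (pairP p' q 0) = pairP p' q := by
  funext i
  by_cases h : i = 0
  · subst h; simp
  · have hv : ¬ (i.1 = 0) := fun hh => h (Fin.ext hh)
    rw [Function.update_of_ne h]
    simp only [pairP, dif_neg hv]

theorem update_pairP_one (p : P a) (q q' : P b) :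
    Function.update (pairP p q) 1 (pairP p q' 1) = pairP p q' := by
  funext i
  by_cases h : i = 1
  · subst h; simp
  · have h0 : i = 0 := by omega
    subst h0
    rw [Function.update_of_ne h]
    have h0 : ((0 : Fin 2) : ℕ) = 0 := rfl
    simp only [pairP, dif_pos h0]

theorem pairP_add_left (p p' : P a) (q : P b) :
    pairP (P := P) (p + p') q 0 = pairP p q 0 + pairP p' q 0 := by
  have h0 : ((0 : Fin 2) : ℕ) = 0 := rfl
  simp only [pairP, dif_pos h0, castP_add]

theorem pairP_add_right (p : P a) (q q' : P b) :
    pairP (P := P) p (q + q') 1 = pairP p q 1 + pairP p q' 1 := by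
  have hv : ¬ ((1 : Fin 2).1 = 0) := by omega
  simp only [pairP, dif_neg hv, castP_add]

theorem gamma2_add_left (H : IsOperadMul gamma idP m) (p p' : P a) (q : P b) :
    gamma (pairFun a b) m (pairP (p + p') q) =
      gamma (pairFun a b) m (pairP p q) + gamma (pairFun a b) m (pairP p' q) := by
  have e1 : pairP (P := P) (p + p') q
      = Function.update (pairP p q) 0 (pairP p q 0 + pairP p' q 0) := by
    rw [← pairP_add_left, update_pairP_zero]
  rw [e1, H.add_right, update_pairP_zero, update_pairP_zero]

theorem gamma2_add_right (H : IsOperadMul gamma idP m) (p : P a) (q q' : P b) :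
    gamma (pairFun a b) m (pairP p (q + q')) =
      gamma (pairFun a b) m (pairP p q) + gamma (pairFun a b) m (pairP p q') := by
  have e1 : pairP (P := P) p (q + q')
      = Function.update (pairP p q) 1 (pairP p q 1 + pairP p q' 1) := by
    rw [← pairP_add_right, update_pairP_one]
  rw [e1, H.add_right, update_pairP_one, update_pairP_one]

/-- `γ(m; ·, q)` as an additive monoid hom. -/
def gamma2HomL (H : IsOperadMul gamma idP m) (q : P b) : P a →+ P (∑ i, pairFun a b i) :=
  AddMonoidHom.mk' (fun p => gamma (pairFun a b) m (pairP p q))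
    (fun p p' => gamma2_add_left H p p' q)

/-- `γ(m; p, ·)` as an additive monoid hom. -/
def gamma2HomR (H : IsOperadMul gamma idP m) (p : P a) : P b →+ P (∑ i, pairFun a b i) :=
  AddMonoidHom.mk' (fun q => gamma (pairFun a b) m (pairP p q))
    (fun q q' => gamma2_add_right H p q q')

theorem gamma2_sum_sum (H : IsOperadMul gamma idP m) {ι κ : Type*}
    (s : Finset ι) (t : Finset κ) (f : ι → P a) (h : κ → P b) :
    gamma (pairFun a b) m (pairP (∑ i ∈ s, f i) (∑ j ∈ t, h j)) =
      ∑ i ∈ s, ∑ j ∈ t, gamma (pairFun a b) m (pairP (f i) (h j)) := by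
  rw [show gamma (pairFun a b) m (pairP (∑ i ∈ s, f i) (∑ j ∈ t, h j))
      = gamma2HomL (a := a) H (∑ j ∈ t, h j) (∑ i ∈ s, f i) from rfl, map_sum]
  refine Finset.sum_congr rfl fun i _ => ?_
  exact map_sum (gamma2HomR H (f i)) h t

end Pair
section Split

variable {N : ℕ}

/-- Sum of the first `k` blocks. -/
def splitA (c : Composition N) (k : ℕ) : ℕ := (c.blocks.take k).sum

/-- The composition given by the first `k` blocks. -/
def splitC1 (c : Composition N) (k : ℕ) : Composition (splitA c k) :=
  ⟨c.blocks.take k, fun h => c.blocks_pos (List.mem_of_mem_take h), rfl⟩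

/-- The composition given by the remaining blocks. -/
def splitC2 (c : Composition N) (k : ℕ) : Composition (N - splitA c k) :=
  ⟨c.blocks.drop k, fun h => c.blocks_pos (List.mem_of_mem_drop h), by
    have h1 := List.sum_take_add_sum_drop c.blocks k
    rw [c.blocks_sum] at h1
    unfold splitA; omega⟩

theorem sum_take_lt (c : Composition N) {k : ℕ} (hk : k ∈ Finset.Ioo 0 c.length) :
    splitA c k ∈ Finset.Ioo 0 N := by
  obtain ⟨hk0, hkL⟩ := Finset.mem_Ioo.mp hk
  have hbl : c.blocks.length = c.length := c.blocks_length
  have h1 := List.sum_take_add_sum_drop c.blocks k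
  rw [c.blocks_sum] at h1
  have htpos : 0 < (c.blocks.take k).sum := by
    have hne : c.blocks.take k ≠ [] := by
      have : (c.blocks.take k).length = k := by
        rw [List.length_take]; omega
      intro hcon; rw [hcon] at this; simp at this; omega
    obtain ⟨u, l, hul⟩ := List.exists_cons_of_ne_nil hne
    have hu : 0 < u := c.blocks_pos (List.mem_of_mem_take (hul ▸ List.mem_cons_self (a := u) (l := l)))
    rw [hul, List.sum_cons]; omega
  have hdpos : 0 < (c.blocks.drop k).sum := by
    have hne : c.blocks.drop k ≠ [] := by
      have : (c.blocks.drop k).length = c.blocks.length - k := List.length_drop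
      intro hcon; rw [hcon] at this; simp at this; omega
    obtain ⟨u, l, hul⟩ := List.exists_cons_of_ne_nil hne
    have hu : 0 < u := c.blocks_pos (List.mem_of_mem_drop (hul ▸ List.mem_cons_self (a := u) (l := l)))
    rw [hul, List.sum_cons]; omega
  exact Finset.mem_Ioo.mpr ⟨htpos, by unfold splitA; omega⟩

theorem splitC1_length (c : Composition N) {k : ℕ} (hk : k ∈ Finset.Ioo 0 c.length) :
    (splitC1 c k).length = k := by
  obtain ⟨_, hkL⟩ := Finset.mem_Ioo.mp hk
  have hbl : c.blocks.length = c.length := c.blocks_length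
  show (c.blocks.take k).length = k
  rw [List.length_take]; omega

theorem splitC2_length (c : Composition N) {k : ℕ} (hk : k ∈ Finset.Ioo 0 c.length) :
    (splitC2 c k).length = c.length - k := by
  have hbl : c.blocks.length = c.length := c.blocks_length
  show (c.blocks.drop k).length = c.length - k
  rw [List.length_drop]

/-- Joining two compositions. -/
def joinC {a : ℕ} (ha : a ∈ Finset.Ioo 0 N) (c1 : Composition a) (c2 : Composition (N - a)) :
    Composition N :=
  ⟨c1.blocks ++ c2.blocks,
   fun h => by
     rcases List.mem_append.mp h with h' | h'
     exacts [c1.blocks_pos h', c2.blocks_pos h'],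
   by
     rw [List.sum_append, c1.blocks_sum, c2.blocks_sum]
     have := (Finset.mem_Ioo.mp ha).2; omega⟩

theorem joinC_length {a : ℕ} (ha : a ∈ Finset.Ioo 0 N) (c1 : Composition a)
    (c2 : Composition (N - a)) : (joinC ha c1 c2).length = c1.length + c2.length := by
  show (c1.blocks ++ c2.blocks).length = _
  rw [List.length_append, c1.blocks_length, c2.blocks_length]

theorem joinC_k_mem {a : ℕ} (ha : a ∈ Finset.Ioo 0 N) (c1 : Composition a)
    (c2 : Composition (N - a)) : c1.length ∈ Finset.Ioo 0 (joinC ha c1 c2).length := by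
  obtain ⟨ha0, haN⟩ := Finset.mem_Ioo.mp ha
  have h1 : 0 < c1.length := c1.length_pos_of_pos ha0
  have h2 : 0 < c2.length := c2.length_pos_of_pos (by omega)
  rw [joinC_length]
  exact Finset.mem_Ioo.mpr ⟨h1, by omega⟩

theorem splitA_joinC {a : ℕ} (ha : a ∈ Finset.Ioo 0 N) (c1 : Composition a)
    (c2 : Composition (N - a)) : splitA (joinC ha c1 c2) c1.length = a := by
  show (List.take c1.length (c1.blocks ++ c2.blocks)).sum = a
  rw [← c1.blocks_length, List.take_left, c1.blocks_sum]

theorem joinC_split (c : Composition N) {k : ℕ} (hk : k ∈ Finset.Ioo 0 c.length) :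
    joinC (sum_take_lt c hk) (splitC1 c k) (splitC2 c k) = c :=
  Composition.ext (List.take_append_drop k c.blocks)

theorem splitC1_joinC {a : ℕ} (ha : a ∈ Finset.Ioo 0 N) (c1 : Composition a)
    (c2 : Composition (N - a)) :
    (splitC1 (joinC ha c1 c2) c1.length).blocks = c1.blocks := by
  show List.take c1.length (c1.blocks ++ c2.blocks) = c1.blocks
  rw [← c1.blocks_length, List.take_left]

theorem splitC2_joinC {a : ℕ} (ha : a ∈ Finset.Ioo 0 N) (c1 : Composition a)
    (c2 : Composition (N - a)) :
    (splitC2 (joinC ha c1 c2) c1.length).blocks = c2.blocks := by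
  show List.drop c1.length (c1.blocks ++ c2.blocks) = c2.blocks
  rw [← c1.blocks_length, List.drop_left]

end Split
section Key

theorem finSigmaMk_zero_val (ns : Fin 2 → ℕ) (j : Fin (ns 0)) :
    (finSigmaMk ns 0 j).1 = j.1 := by
  show (∑ l ∈ Finset.univ.filter (fun l => l < (0 : Fin 2)), ns l) + j.1 = j.1
  have he : Finset.univ.filter (fun l => l < (0 : Fin 2)) = ∅ := by decide
  rw [he]; simp

theorem finSigmaMk_one_val (ns : Fin 2 → ℕ) (j : Fin (ns 1)) :
    (finSigmaMk ns 1 j).1 = ns 0 + j.1 := by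
  show (∑ l ∈ Finset.univ.filter (fun l => l < (1 : Fin 2)), ns l) + j.1 = ns 0 + j.1
  have he : Finset.univ.filter (fun l => l < (1 : Fin 2)) = {0} := by decide
  rw [he]; simp

variable {N : ℕ}

theorem blocksFun_eq_take (c : Composition N) (k : ℕ) (i : Fin c.length)
    (j : Fin (splitC1 c k).length) (hij : i.1 = j.1) :
    c.blocksFun i = (splitC1 c k).blocksFun j := by
  show c.blocks.get i = (c.blocks.take k).get j
  simp only [List.get_eq_getElem, List.getElem_take, hij]
  exact List.getElem_take.symm

theorem blocksFun_eq_drop (c : Composition N) (k : ℕ) (i : Fin c.length)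
    (j : Fin (splitC2 c k).length) (hij : i.1 = k + j.1) :
    c.blocksFun i = (splitC2 c k).blocksFun j := by
  show c.blocks.get i = (c.blocks.drop k).get j
  simp only [List.get_eq_getElem, List.getElem_drop, hij]
  exact List.getElem_drop.symm

variable {P : ℕ → Type} [∀ n, AddCommGroup (P n)] [∀ n, Module ℂ (P n)]
  {gamma : OpGamma P} {idP : P 1} {m : P 2}

theorem keyLemma (H : IsOperadMul gamma idP m) (x y g : Ser P)
    (c : Composition N) {k : ℕ} (hk : k ∈ Finset.Ioo 0 c.length)
    (h1 : (∑ i, pairFun k (c.length - k) i) = c.length)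
    (h2 : (∑ i, pairFun (splitA c k) (N - splitA c k) i) = N) :
    castP c.sum_blocksFun (gamma c.blocksFun
        (castP h1 (gamma (pairFun k (c.length - k)) m (pairP (x k) (y (c.length - k)))))
        (fun i => g (c.blocksFun i)))
    = castP h2 (gamma (pairFun (splitA c k) (N - splitA c k)) m
        (pairP
          (castP (splitC1 c k).sum_blocksFun
            (gamma (splitC1 c k).blocksFun (x (splitC1 c k).length)
              (fun i => g ((splitC1 c k).blocksFun i))))
          (castP (splitC2 c k).sum_blocksFun
            (gamma (splitC2 c k).blocksFun (y (splitC2 c k).length)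
              (fun i => g ((splitC2 c k).blocksFun i)))))) := by
  obtain ⟨hk0, hkL⟩ := Finset.mem_Ioo.mp hk
  have hlen1 : k = (splitC1 c k).length := (splitC1_length c hk).symm
  have hlen2 : c.length - k = (splitC2 c k).length := (splitC2_length c hk).symm
  apply castP_eq_castP
  -- abbreviations
  have stepA : HEq
      (gamma c.blocksFun
        (castP h1 (gamma (pairFun k (c.length - k)) m (pairP (x k) (y (c.length - k)))))
        (fun i => g (c.blocksFun i)))
      (gamma (fun i => c.blocksFun (Fin.cast h1 i))
        (gamma (pairFun k (c.length - k)) m (pairP (x k) (y (c.length - k))))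
        (fun l => g (c.blocksFun (Fin.cast h1 l)))) := by
    refine (gamma_congr gamma h1
      (fun i => congrArg c.blocksFun (Fin.ext rfl))
      ((castP_heq h1 _).symm)
      (fun i => ?_)).symm
    have hv : c.blocksFun (Fin.cast h1 (Fin.cast h1.symm i)) = c.blocksFun i :=
      congrArg c.blocksFun (Fin.ext rfl)
    rw [hv]
  have stepB := H.assoc (pairFun k (c.length - k)) m (pairP (x k) (y (c.length - k)))
      (fun i => c.blocksFun (Fin.cast h1 i)) (fun l => g (c.blocksFun (Fin.cast h1 l)))
  have hms0 : ∀ j : Fin (pairFun k (c.length - k) 0),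
      c.blocksFun (Fin.cast h1 (finSigmaMk (pairFun k (c.length - k)) 0 j))
        = (splitC1 c k).blocksFun (Fin.cast hlen1 j) := by
    intro j
    refine blocksFun_eq_take c k _ _ ?_
    show (finSigmaMk (pairFun k (c.length - k)) 0 j).1 = j.1
    exact finSigmaMk_zero_val _ j
  have hms1 : ∀ j : Fin (pairFun k (c.length - k) 1),
      c.blocksFun (Fin.cast h1 (finSigmaMk (pairFun k (c.length - k)) 1 j))
        = (splitC2 c k).blocksFun (Fin.cast hlen2 j) := by
    intro j
    refine blocksFun_eq_drop c k _ _ ?_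
    show (finSigmaMk (pairFun k (c.length - k)) 1 j).1 = k + j.1
    exact finSigmaMk_one_val _ j
  have stepC : HEq
      (gamma (fun i : Fin 2 => ∑ j : Fin (pairFun k (c.length - k) i),
          c.blocksFun (Fin.cast h1 (finSigmaMk (pairFun k (c.length - k)) i j))) m
        (fun i => gamma (fun j => c.blocksFun (Fin.cast h1 (finSigmaMk (pairFun k (c.length - k)) i j)))
          (pairP (x k) (y (c.length - k)) i)
          (fun j => g (c.blocksFun (Fin.cast h1 (finSigmaMk (pairFun k (c.length - k)) i j))))))
      (gamma (pairFun (splitA c k) (N - splitA c k)) m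
        (pairP
          (castP (splitC1 c k).sum_blocksFun
            (gamma (splitC1 c k).blocksFun (x (splitC1 c k).length)
              (fun i => g ((splitC1 c k).blocksFun i))))
          (castP (splitC2 c k).sum_blocksFun
            (gamma (splitC2 c k).blocksFun (y (splitC2 c k).length)
              (fun i => g ((splitC2 c k).blocksFun i)))))) := by
    refine gamma_congr gamma rfl ?_ HEq.rfl ?_
    · intro i
      match i with
      | 0 =>
        show (∑ j : Fin (pairFun k (c.length - k) 0),
            c.blocksFun (Fin.cast h1 (finSigmaMk (pairFun k (c.length - k)) 0 j))) = splitA c k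
        calc (∑ j : Fin (pairFun k (c.length - k) 0),
              c.blocksFun (Fin.cast h1 (finSigmaMk (pairFun k (c.length - k)) 0 j)))
            = ∑ j : Fin (pairFun k (c.length - k) 0), (splitC1 c k).blocksFun (Fin.cast hlen1 j) :=
              Finset.sum_congr rfl (fun j _ => hms0 j)
          _ = ∑ i : Fin (splitC1 c k).length, (splitC1 c k).blocksFun i :=
              Fin.sum_congr' _ hlen1
          _ = splitA c k := (splitC1 c k).sum_blocksFun
      | 1 =>
        show (∑ j : Fin (pairFun k (c.length - k) 1),
            c.blocksFun (Fin.cast h1 (finSigmaMk (pairFun k (c.length - k)) 1 j))) = N - splitA c k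
        calc (∑ j : Fin (pairFun k (c.length - k) 1),
              c.blocksFun (Fin.cast h1 (finSigmaMk (pairFun k (c.length - k)) 1 j)))
            = ∑ j : Fin (pairFun k (c.length - k) 1), (splitC2 c k).blocksFun (Fin.cast hlen2 j) :=
              Finset.sum_congr rfl (fun j _ => hms1 j)
          _ = ∑ i : Fin (splitC2 c k).length, (splitC2 c k).blocksFun i :=
              Fin.sum_congr' _ hlen2
          _ = N - splitA c k := (splitC2 c k).sum_blocksFun
    · intro i
      match i with
      | 0 =>
        have e0 : pairP
            (castP (splitC1 c k).sum_blocksFun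
              (gamma (splitC1 c k).blocksFun (x (splitC1 c k).length)
                (fun i => g ((splitC1 c k).blocksFun i))))
            (castP (splitC2 c k).sum_blocksFun
              (gamma (splitC2 c k).blocksFun (y (splitC2 c k).length)
                (fun i => g ((splitC2 c k).blocksFun i)))) 0
            = castP (by simp [pairFun])
              (castP (splitC1 c k).sum_blocksFun
                (gamma (splitC1 c k).blocksFun (x (splitC1 c k).length)
                  (fun i => g ((splitC1 c k).blocksFun i)))) := by
          have h0 : ((0 : Fin 2) : ℕ) = 0 := rfl
          simp only [pairP, dif_pos h0]
        rw [e0]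
        refine HEq.trans ?_ ((castP_heq _ _).trans (castP_heq _ _)).symm
        refine gamma_congr gamma hlen1 (fun i => hms0 (Fin.cast hlen1.symm i)) ?_ ?_
        · -- HEq (pairP (x k) (y (c.length - k)) 0) (x (splitC1 c k).length)
          have h0 : ((0 : Fin 2) : ℕ) = 0 := rfl
          have e1 : pairP (P := P) (x k) (y (c.length - k)) 0 = castP (by simp [pairFun]) (x k) := by
            simp only [pairP, dif_pos h0]
          show HEq (pairP (P := P) (x k) (y (c.length - k)) 0) (x (splitC1 c k).length)
          rw [e1]
          exact (castP_heq _ _).trans (hlen1 ▸ HEq.rfl)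
        · intro i
          show HEq (g (c.blocksFun (Fin.cast h1
              (finSigmaMk (pairFun k (c.length - k)) 0 (Fin.cast hlen1.symm i)))))
            (g ((splitC1 c k).blocksFun i))
          rw [hms0 (Fin.cast hlen1.symm i)]
          have hcc : Fin.cast hlen1 (Fin.cast hlen1.symm i) = i := Fin.ext rfl
          exact hcc ▸ HEq.rfl
      | 1 =>
        have h1v : ¬ (((1 : Fin 2) : ℕ) = 0) := by omega
        have e0 : pairP
            (castP (splitC1 c k).sum_blocksFun
              (gamma (splitC1 c k).blocksFun (x (splitC1 c k).length)
                (fun i => g ((splitC1 c k).blocksFun i))))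
            (castP (splitC2 c k).sum_blocksFun
              (gamma (splitC2 c k).blocksFun (y (splitC2 c k).length)
                (fun i => g ((splitC2 c k).blocksFun i)))) 1
            = castP (by simp [pairFun])
              (castP (splitC2 c k).sum_blocksFun
                (gamma (splitC2 c k).blocksFun (y (splitC2 c k).length)
                  (fun i => g ((splitC2 c k).blocksFun i)))) := by
          simp only [pairP, dif_neg h1v]
        rw [e0]
        refine HEq.trans ?_ ((castP_heq _ _).trans (castP_heq _ _)).symm
        refine gamma_congr gamma hlen2 (fun i => hms1 (Fin.cast hlen2.symm i)) ?_ ?_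
        · have e1 : pairP (P := P) (x k) (y (c.length - k)) 1
              = castP (by simp [pairFun]) (y (c.length - k)) := by
            simp only [pairP, dif_neg h1v]
          show HEq (pairP (P := P) (x k) (y (c.length - k)) 1) (y (splitC2 c k).length)
          rw [e1]
          exact (castP_heq _ _).trans (hlen2 ▸ HEq.rfl)
        · intro i
          show HEq (g (c.blocksFun (Fin.cast h1
              (finSigmaMk (pairFun k (c.length - k)) 1 (Fin.cast hlen2.symm i)))))
            (g ((splitC2 c k).blocksFun i))
          rw [hms1 (Fin.cast hlen2.symm i)]
          have hcc : Fin.cast hlen2 (Fin.cast hlen2.symm i) = i := Fin.ext rfl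
          exact hcc ▸ HEq.rfl
  exact stepA.trans (stepB.trans stepC)

end Key
section Main

variable {P : ℕ → Type} [∀ n, AddCommGroup (P n)] [∀ n, Module ℂ (P n)]
  {gamma : OpGamma P} {idP : P 1} {m : P 2}

theorem timesS_add_left (H : IsOperadMul gamma idP m) (x y g : Ser P) :
    timesS gamma (x + y) g = timesS gamma x g + timesS gamma y g := by
  funext N
  simp only [timesS, Pi.add_apply]
  by_cases hN : N = 0
  · simp [hN]
  · rw [dif_neg hN, dif_neg hN, dif_neg hN, ← Finset.sum_add_distrib]
    refine Finset.sum_congr rfl fun c _ => ?_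
    rw [H.add_left, castP_add]

/-- Sigma extensionality for the left-hand index type. -/
theorem sigL_ext {N : ℕ} {c c' : Composition N}
    {k : {k // k ∈ Finset.Ioo 0 c.length}} {k' : {k // k ∈ Finset.Ioo 0 c'.length}}
    (h : c = c') (hk : k.1 = k'.1) :
    (⟨c, k⟩ : Σ c : Composition N, {k // k ∈ Finset.Ioo 0 c.length}) = ⟨c', k'⟩ := by
  subst h
  cases Subtype.ext hk
  rfl

/-- Sigma extensionality for the right-hand index type. -/
theorem sigR_ext {N : ℕ} {a a' : {a // a ∈ Finset.Ioo 0 N}}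
    {z : Composition a.1 × Composition (N - a.1)}
    {z' : Composition a'.1 × Composition (N - a'.1)}
    (h : a.1 = a'.1) (h1 : z.1.blocks = z'.1.blocks) (h2 : z.2.blocks = z'.2.blocks) :
    (⟨a, z⟩ : Σ a : {a // a ∈ Finset.Ioo 0 N}, Composition a.1 × Composition (N - a.1))
      = ⟨a', z'⟩ := by
  obtain ⟨av, ham⟩ := a
  obtain ⟨av', ham'⟩ := a'
  dsimp at h
  subst h
  have hz : z = z' := Prod.ext (Composition.ext h1) (Composition.ext h2)
  rw [hz]

theorem timesS_cdotSS (H : IsOperadMul gamma idP m) (x y g : Ser P) :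
    timesS gamma (cdotSS gamma m x y) g
      = cdotSS gamma m (timesS gamma x g) (timesS gamma y g) := by
  funext N
  by_cases hN : N = 0
  · subst hN
    rw [show timesS gamma (cdotSS gamma m x y) g 0 = 0 from dif_pos rfl]
    exact (Finset.sum_eq_zero fun k _ => absurd (Finset.mem_Ioo.mp k.2) (by omega)).symm
  · have hL1 : timesS gamma (cdotSS gamma m x y) g N
        = ∑ c : Composition N, ∑ k ∈ (Finset.Ioo 0 c.length).attach,
            castP c.sum_blocksFun (gamma c.blocksFun
              (castP (show (∑ i, pairFun k.1 (c.length - k.1) i) = c.length by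
                  have hm := Finset.mem_Ioo.mp k.2
                  rw [Fin.sum_univ_two]
                  show k.1 + (c.length - k.1) = c.length
                  omega)
                (gamma (pairFun k.1 (c.length - k.1)) m
                  (pairP (x k.1) (y (c.length - k.1)))))
              (fun i => g (c.blocksFun i))) := by
      simp only [timesS]
      rw [dif_neg hN]
      refine Finset.sum_congr rfl fun c _ => ?_
      simp only [cdotSS]
      rw [gamma_sum_left H, castP_sum]
    have hR1 : cdotSS gamma m (timesS gamma x g) (timesS gamma y g) N
        = ∑ a ∈ (Finset.Ioo 0 N).attach, ∑ c1 : Composition a.1, ∑ c2 : Composition (N - a.1),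
            castP (show (∑ i, pairFun a.1 (N - a.1) i) = N by
                have hm := Finset.mem_Ioo.mp a.2
                rw [Fin.sum_univ_two]
                show a.1 + (N - a.1) = N
                omega)
              (gamma (pairFun a.1 (N - a.1)) m
                (pairP
                  (castP c1.sum_blocksFun
                    (gamma c1.blocksFun (x c1.length) (fun i => g (c1.blocksFun i))))
                  (castP c2.sum_blocksFun
                    (gamma c2.blocksFun (y c2.length) (fun i => g (c2.blocksFun i)))))) := by
      simp only [cdotSS]
      refine Finset.sum_congr rfl fun a _ => ?_
      have ha := Finset.mem_Ioo.mp a.2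
      have hx : timesS gamma x g a.1
          = ∑ c1 : Composition a.1, castP c1.sum_blocksFun
              (gamma c1.blocksFun (x c1.length) (fun i => g (c1.blocksFun i))) := by
        simp only [timesS]
        rw [dif_neg (by omega)]
      have hy : timesS gamma y g (N - a.1)
          = ∑ c2 : Composition (N - a.1), castP c2.sum_blocksFun
              (gamma c2.blocksFun (y c2.length) (fun i => g (c2.blocksFun i))) := by
        simp only [timesS]
        rw [dif_neg (by omega)]
      rw [hx, hy, gamma2_sum_sum H, castP_sum]
      refine Finset.sum_congr rfl fun c1 _ => ?_
      rw [castP_sum]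
    rw [hL1, hR1]
    rw [Finset.sum_sigma' Finset.univ (fun c : Composition N => (Finset.Ioo 0 c.length).attach)]
    have hR2 : ∀ a : {a // a ∈ Finset.Ioo 0 N},
        (∑ c1 : Composition a.1, ∑ c2 : Composition (N - a.1),
          castP (show (∑ i, pairFun a.1 (N - a.1) i) = N by
                have hm := Finset.mem_Ioo.mp a.2
                rw [Fin.sum_univ_two]
                show a.1 + (N - a.1) = N
                omega)
              (gamma (pairFun a.1 (N - a.1)) m
                (pairP
                  (castP c1.sum_blocksFun
                    (gamma c1.blocksFun (x c1.length) (fun i => g (c1.blocksFun i))))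
                  (castP c2.sum_blocksFun
                    (gamma c2.blocksFun (y c2.length) (fun i => g (c2.blocksFun i)))))))
        = ∑ z : Composition a.1 × Composition (N - a.1),
            castP (show (∑ i, pairFun a.1 (N - a.1) i) = N by
                have hm := Finset.mem_Ioo.mp a.2
                rw [Fin.sum_univ_two]
                show a.1 + (N - a.1) = N
                omega)
              (gamma (pairFun a.1 (N - a.1)) m
                (pairP
                  (castP z.1.sum_blocksFun
                    (gamma z.1.blocksFun (x z.1.length) (fun i => g (z.1.blocksFun i))))
                  (castP z.2.sum_blocksFun
                    (gamma z.2.blocksFun (y z.2.length) (fun i => g (z.2.blocksFun i)))))) := by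
      intro a
      rw [Fintype.sum_prod_type]
    rw [Finset.sum_congr rfl (fun a _ => hR2 a)]
    rw [Finset.sum_sigma' (Finset.Ioo 0 N).attach
      (fun a : {a // a ∈ Finset.Ioo 0 N} => (Finset.univ : Finset (Composition a.1 × Composition (N - a.1))))]
    refine Finset.sum_nbij'
      (fun p => ⟨⟨splitA p.1 p.2.1, sum_take_lt p.1 p.2.2⟩,
        (splitC1 p.1 p.2.1, splitC2 p.1 p.2.1)⟩)
      (fun p => ⟨joinC p.1.2 p.2.1 p.2.2, ⟨p.2.1.length, joinC_k_mem p.1.2 p.2.1 p.2.2⟩⟩)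
      (fun p _ => Finset.mem_sigma.mpr ⟨Finset.mem_attach _ _, Finset.mem_univ _⟩)
      (fun p _ => Finset.mem_sigma.mpr ⟨Finset.mem_univ _, Finset.mem_attach _ _⟩)
      (fun p _ => ?_) (fun p _ => ?_) (fun p _ => ?_)
    · -- left inverse
      exact sigL_ext (joinC_split p.1 p.2.2) (splitC1_length p.1 p.2.2)
    · -- right inverse
      exact sigR_ext (splitA_joinC p.1.2 p.2.1 p.2.2)
        (splitC1_joinC p.1.2 p.2.1 p.2.2) (splitC2_joinC p.1.2 p.2.1 p.2.2)
    · -- values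
      exact keyLemma H x y g p.1 p.2.2 _ _

end Main
/-- Compatibility of the conjugation action `↷` of `G^{inv}` on `G` with the right action
`↶` of `G` on `G^{inv}`: `(h ↷ g') × g = (h ↶ g) ↷ (g' × g)`, the inverse of `h ↶ g`
being `h⁻¹ ↶ g`. -/
theorem conj_act_compat (P : ℕ → Type) [∀ n, AddCommGroup (P n)] [∀ n, Module ℂ (P n)]
    (gamma : OpGamma P) (idP : P 1) (m : P 2) (H : IsOperadMul gamma idP m)
    (x xinv g g' : Ser P)
    (hg : g 1 = idP) (hg' : g' 1 = idP)
    (hxinv : gmul gamma m x xinv = 0 ∧ gmul gamma m xinv x = 0) :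
    timesS gamma (conjS gamma m x g' xinv) g =
      conjS gamma m (timesS gamma x g) (timesS gamma g' g) (timesS gamma xinv g) := by
  show timesS gamma (g' + cdotSS gamma m x g' + cdotSS gamma m g' xinv
      + cdotSS gamma m (cdotSS gamma m x g') xinv) g = _
  rw [timesS_add_left H, timesS_add_left H, timesS_add_left H,
    timesS_cdotSS H, timesS_cdotSS H, timesS_cdotSS H, timesS_cdotSS H]
  rfl
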